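/- arXiv:0904.3120 — 10 statements merged into one kernel-verified Lean document; each statement's English description precedes it below -/
import Mathlib

section
/- For closed subspaces X and Y of a Banach space Z (with X, Y nonzero), d(X,Y) = 0 if and only if d(Y,X) = 0. -/
/-- The distance `d(X,Y) = inf {‖x - y‖ : x ∈ S_X, y ∈ Y}` between subspaces. -/
noncomputable def subspaceDist {Z : Type*} [NormedAddCommGroup Z] [NormedSpace ℂ Z]
    (X Y : Submodule ℂ Z) : ℝ :=
  sInf {r : ℝ | ∃ x ∈ X, ‖x‖ = 1 ∧ ∃ y ∈ Y, r = ‖x - y‖}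

/-!
Normalizing `y` moves it by `|1 - ‖y‖| ≤ ‖x - y‖` when `‖x‖ = 1`, so every near pair `(x, y)` for
`d(X,Y)` yields the pair `(y / ‖y‖, x)` for `d(Y,X)` at most twice as far apart:
`d(Y,X) ≤ 2 d(X,Y)` as soon as `X ≠ ⊥`.
-/

namespace NormedSpace

variable {V : Type*} [NormedAddCommGroup V] [NormedSpace ℝ V]

theorem norm_normalize_sub_self_le (y : V) : ‖normalize y - y‖ ≤ |1 - ‖y‖| := by
  rcases eq_or_ne y 0 with rfl | hy
  · simp
  have hy' : ‖y‖ ≠ 0 := norm_ne_zero_iff.mpr hy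
  refine le_of_eq ?_
  calc ‖normalize y - y‖ = ‖(‖y‖⁻¹ - 1) • y‖ := by rw [normalize, sub_smul, one_smul]
    _ = |‖y‖⁻¹ - 1| * ‖y‖ := by rw [norm_smul, Real.norm_eq_abs]
    _ = |1 - ‖y‖| := by
        rw [← abs_norm y, ← abs_mul, abs_norm, sub_mul, inv_mul_cancel₀ hy', one_mul]

theorem norm_normalize_sub_le_two_mul {x : V} (hx : ‖x‖ = 1) (y : V) :
    ‖normalize y - x‖ ≤ 2 * ‖x - y‖ := by
  have hy : |1 - ‖y‖| ≤ ‖x - y‖ := hx ▸ abs_norm_sub_norm_le x y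
  calc ‖normalize y - x‖ ≤ ‖normalize y - y‖ + ‖y - x‖ := norm_sub_le_norm_sub_add_norm_sub _ _ _
    _ ≤ 2 * ‖x - y‖ := by
        rw [norm_sub_rev y x]
        linarith [norm_normalize_sub_self_le y]

end NormedSpace

section SubspaceDist

variable {Z : Type*} [NormedAddCommGroup Z] [NormedSpace ℂ Z] (X Y : Submodule ℂ Z)

theorem subspaceDist_nonneg : 0 ≤ subspaceDist X Y :=
  Real.sInf_nonneg <| by
    rintro r ⟨x, -, -, y, -, rfl⟩
    exact norm_nonneg _

variable {X Y}

theorem subspaceDist_le {x y : Z} (hx : x ∈ X) (hx1 : ‖x‖ = 1) (hy : y ∈ Y) :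
    subspaceDist X Y ≤ ‖x - y‖ :=
  csInf_le ⟨0, by rintro r ⟨x, -, -, y, -, rfl⟩; exact norm_nonneg _⟩ ⟨x, hx, hx1, y, hy, rfl⟩

theorem subspaceDist_le_one : subspaceDist X Y ≤ 1 := by
  by_cases h : ∃ x ∈ X, ‖x‖ = 1
  · obtain ⟨x, hx, hx1⟩ := h
    simpa [hx1] using subspaceDist_le hx hx1 Y.zero_mem
  · push Not at h
    have hempty : {r : ℝ | ∃ x ∈ X, ‖x‖ = 1 ∧ ∃ y ∈ Y, r = ‖x - y‖} = ∅ :=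
      Set.eq_empty_of_forall_notMem fun r ⟨x, hx, hx1, _⟩ => h x hx hx1
    rw [subspaceDist, hempty, Real.sInf_empty]
    exact zero_le_one

theorem exists_mem_norm_eq_one_of_ne_bot (hX : X ≠ ⊥) : ∃ x ∈ X, ‖x‖ = 1 := by
  obtain ⟨x, hx, hx0⟩ := Submodule.exists_mem_ne_zero_of_ne_bot hX
  exact ⟨NormedSpace.normalize x, X.smul_of_tower_mem _ hx, NormedSpace.norm_normalize hx0⟩

theorem le_subspaceDist {c : ℝ} (hX : X ≠ ⊥)
    (h : ∀ x ∈ X, ‖x‖ = 1 → ∀ y ∈ Y, c ≤ ‖x - y‖) : c ≤ subspaceDist X Y := by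
  obtain ⟨x, hx, hx1⟩ := exists_mem_norm_eq_one_of_ne_bot hX
  exact le_csInf ⟨_, x, hx, hx1, 0, Y.zero_mem, rfl⟩ <| by
    rintro r ⟨x, hx, hx1, y, hy, rfl⟩
    exact h x hx hx1 y hy

theorem subspaceDist_le_two_mul (hX : X ≠ ⊥) : subspaceDist Y X ≤ 2 * subspaceDist X Y := by
  rw [← div_le_iff₀' two_pos]
  refine le_subspaceDist hX fun x hx hx1 y hy => ?_
  rw [div_le_iff₀' two_pos]
  rcases eq_or_ne y 0 with rfl | hy0
  · rw [sub_zero, hx1]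
    linarith [subspaceDist_le_one (X := Y) (Y := X)]
  · exact (subspaceDist_le (Y.smul_of_tower_mem _ hy) (NormedSpace.norm_normalize hy0) hx).trans
      (NormedSpace.norm_normalize_sub_le_two_mul hx1 y)

theorem subspaceDist_swap_eq_zero (hX : X ≠ ⊥) (h : subspaceDist X Y = 0) :
    subspaceDist Y X = 0 :=
  le_antisymm (by simpa [h] using subspaceDist_le_two_mul (Y := Y) hX) (subspaceDist_nonneg Y X)

end SubspaceDist

theorem subspaceDist_eq_zero_symm_general {Z : Type*} [NormedAddCommGroup Z] [NormedSpace ℂ Z]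
    (X Y : Submodule ℂ Z) (hX0 : X ≠ ⊥) (hY0 : Y ≠ ⊥) :
    subspaceDist X Y = 0 ↔ subspaceDist Y X = 0 :=
  ⟨subspaceDist_swap_eq_zero hX0, subspaceDist_swap_eq_zero hY0⟩

/-- For closed nonzero subspaces `X, Y` of a Banach space `Z`,
`d(X,Y) = 0` iff `d(Y,X) = 0`. -/
theorem subspaceDist_eq_zero_symm {Z : Type*} [NormedAddCommGroup Z] [NormedSpace ℂ Z]
    [CompleteSpace Z] (X Y : Submodule ℂ Z) (hX : IsClosed (X : Set Z))
    (hY : IsClosed (Y : Set Z)) (hX0 : X ≠ ⊥) (hY0 : Y ≠ ⊥) :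
    subspaceDist X Y = 0 ↔ subspaceDist Y X = 0 :=
  subspaceDist_eq_zero_symm_general X Y hX0 hY0
end

section
/- Let Z = (∑ Y)_p for 1 ≤ p < ∞ with shifts L, R and coordinate projections Pᵢ. For any T ∈ L(Z) and any i, j ≥ 0, the series ∑_{n=0}^∞ Rⁿ (Pᵢ T Pⱼ) Lⁿ converges strongly (i.e., pointwise in norm) to a bounded operator on Z. -/
/-!
Write `Tᵢⱼ = Pᵢ T Pⱼ`, read as an operator on `Y`. The `n`-th term `Rⁿ (Pᵢ T Pⱼ) Lⁿ x` is the
vector concentrated in coordinate `i + n` with value `Tᵢⱼ x_{j+n}`, i.e. `Rⁱ` applied to the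
`n`-th term of the coordinate expansion of `D (Lʲ x)`, where `D` is the diagonal operator with
constant entry `Tᵢⱼ`. Since `p < ∞` that expansion converges in norm, so the series converges
to `Rⁱ D Lʲ x`, and `Rⁱ D Lʲ` is bounded.
-/

open ENNReal Filter Topology

namespace lp

variable {𝕜 E : Type*} [NontriviallyNormedField 𝕜] [NormedAddCommGroup E] [NormedSpace 𝕜 E]
  {p : ℝ≥0∞} [Fact (1 ≤ p)]

theorem pow_apply_of_shiftLeft {L : lp (fun _ : ℕ => E) p →L[𝕜] lp (fun _ : ℕ => E) p}
    (hL : ∀ f n, L f n = f (n + 1)) (m : ℕ) (f : lp (fun _ : ℕ => E) p) (n : ℕ) :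
    (L ^ m) f n = f (n + m) := by
  induction m generalizing f with
  | zero => rfl
  | succ m ih => rw [pow_succ, mul_apply_eq_comp, ih, hL, add_assoc]

theorem apply_single_of_shiftRight {R : lp (fun _ : ℕ => E) p →L[𝕜] lp (fun _ : ℕ => E) p}
    (hR0 : ∀ f, R f 0 = 0) (hR : ∀ f n, R f (n + 1) = f n) (k : ℕ) (u : E) :
    R (lp.single p k u) = lp.single p (k + 1) u := by
  ext (_ | n)
  · simp [hR0, lp.single_apply]
  · simp [hR, lp.single_apply, Pi.single_apply]

theorem pow_single_of_shiftRight {R : lp (fun _ : ℕ => E) p →L[𝕜] lp (fun _ : ℕ => E) p}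
    (hR0 : ∀ f, R f 0 = 0) (hR : ∀ f n, R f (n + 1) = f n) (m k : ℕ) (u : E) :
    (R ^ m) (lp.single p k u) = lp.single p (k + m) u := by
  induction m with
  | zero => rfl
  | succ m ih =>
    rw [pow_succ', mul_apply_eq_comp, ih, apply_single_of_shiftRight hR0 hR, add_assoc]

theorem eq_single_of_proj {α : Type*} [DecidableEq α]
    {Q : lp (fun _ : α => E) p →L[𝕜] lp (fun _ : α => E) p} {i : α}
    (hQ : ∀ f n, Q f n = if n = i then f n else 0) (f : lp (fun _ : α => E) p) :
    Q f = lp.single p i (f i) := by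
  ext n
  by_cases h : n = i
  · subst h; simp [hQ]
  · simp [hQ, h, lp.single_apply]

noncomputable def matrixEntry {α : Type*} [DecidableEq α]
    (T : lp (fun _ : α => E) p →L[𝕜] lp (fun _ : α => E) p) (i j : α) : E →L[𝕜] E :=
  lp.evalCLM 𝕜 (fun _ : α => E) p i ∘L T ∘L lp.singleContinuousLinearMap 𝕜 (fun _ : α => E) p j

noncomputable def matrixEntryDiagonal (T : lp (fun _ : ℕ => E) p →L[𝕜] lp (fun _ : ℕ => E) p)
    (i j : ℕ) :
    lp (fun _ : ℕ => E) p →L[𝕜] lp (fun _ : ℕ => E) p :=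
  lp.mapCLM p (fun _ => matrixEntry T i j) (norm_nonneg _) fun _ => le_rfl

theorem matrixEntryDiagonal_apply (T : lp (fun _ : ℕ => E) p →L[𝕜] lp (fun _ : ℕ => E) p)
    (i j : ℕ) (f : lp (fun _ : ℕ => E) p) (n : ℕ) :
    matrixEntryDiagonal T i j f n = matrixEntry T i j (f n) :=
  lp.mapCLM_apply_coe ..

variable {L R T : lp (fun _ : ℕ => E) p →L[𝕜] lp (fun _ : ℕ => E) p}
  {P : ℕ → (lp (fun _ : ℕ => E) p →L[𝕜] lp (fun _ : ℕ => E) p)}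

theorem shiftConj_apply (hL : ∀ f n, L f n = f (n + 1)) (hR0 : ∀ f, R f 0 = 0)
    (hR : ∀ f n, R f (n + 1) = f n) (hP : ∀ i f n, P i f n = if n = i then f n else 0)
    (i j n : ℕ) (x : lp (fun _ : ℕ => E) p) :
    (R ^ n * (P i * T * P j) * L ^ n) x =
      (R ^ i) (lp.single p n (matrixEntry T i j ((L ^ j) x n))) := by
  simp only [mul_apply_eq_comp, eq_single_of_proj (hP _), pow_single_of_shiftRight hR0 hR,
    pow_apply_of_shiftLeft hL, add_comm]
  rfl

theorem hasSum_shiftConj (hp : p ≠ ∞) (hL : ∀ f n, L f n = f (n + 1)) (hR0 : ∀ f, R f 0 = 0)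
    (hR : ∀ f n, R f (n + 1) = f n) (hP : ∀ i f n, P i f n = if n = i then f n else 0)
    (i j : ℕ) (x : lp (fun _ : ℕ => E) p) :
    HasSum (fun n => (R ^ n * (P i * T * P j) * L ^ n) x)
      ((R ^ i * matrixEntryDiagonal T i j * L ^ j) x) := by
  have := (lp.hasSum_single hp (matrixEntryDiagonal T i j ((L ^ j) x))).mapL (R ^ i)
  simpa only [shiftConj_apply hL hR0 hR hP, mul_apply_eq_comp, matrixEntryDiagonal_apply]
    using this

end lp

theorem strong_convergence_PiTPj_general {Y : Type*} [NormedAddCommGroup Y] [NormedSpace ℂ Y]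
    (p : ℝ≥0∞) [Fact (1 ≤ p)] (hp : p ≠ ∞)
    (L R : lp (fun _ : ℕ => Y) p →L[ℂ] lp (fun _ : ℕ => Y) p)
    (P : ℕ → (lp (fun _ : ℕ => Y) p →L[ℂ] lp (fun _ : ℕ => Y) p))
    (hL : ∀ (f : lp (fun _ : ℕ => Y) p) (n : ℕ), L f n = f (n + 1))
    (hR0 : ∀ f : lp (fun _ : ℕ => Y) p, R f 0 = 0)
    (hR : ∀ (f : lp (fun _ : ℕ => Y) p) (n : ℕ), R f (n + 1) = f n)
    (hP : ∀ (i : ℕ) (f : lp (fun _ : ℕ => Y) p) (n : ℕ), P i f n = if n = i then f n else 0)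
    (T : lp (fun _ : ℕ => Y) p →L[ℂ] lp (fun _ : ℕ => Y) p) (i j : ℕ) :
    ∃ S : lp (fun _ : ℕ => Y) p →L[ℂ] lp (fun _ : ℕ => Y) p,
      ∀ x : lp (fun _ : ℕ => Y) p,
        Tendsto (fun N => ∑ n ∈ Finset.range N, (R ^ n * (P i * T * P j) * L ^ n) x)
          atTop (𝓝 (S x)) :=
  ⟨R ^ i * lp.matrixEntryDiagonal T i j * L ^ j, fun x =>
    (lp.hasSum_shiftConj hp hL hR0 hR hP i j x).tendsto_sum_nat⟩

/-- For `Z = (∑ Y)_p`, `1 ≤ p < ∞`, any `T ∈ L(Z)` and any `i, j`, the series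
`∑ₙ Rⁿ (Pᵢ T Pⱼ) Lⁿ` converges strongly to a bounded operator. -/
theorem strong_convergence_PiTPj {Y : Type*} [NormedAddCommGroup Y] [NormedSpace ℂ Y]
    [CompleteSpace Y] (p : ℝ≥0∞) [Fact (1 ≤ p)] (hp : p ≠ ∞)
    (L R : lp (fun _ : ℕ => Y) p →L[ℂ] lp (fun _ : ℕ => Y) p)
    (P : ℕ → (lp (fun _ : ℕ => Y) p →L[ℂ] lp (fun _ : ℕ => Y) p))
    (hL : ∀ (f : lp (fun _ : ℕ => Y) p) (n : ℕ), L f n = f (n + 1))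
    (hR0 : ∀ f : lp (fun _ : ℕ => Y) p, R f 0 = 0)
    (hR : ∀ (f : lp (fun _ : ℕ => Y) p) (n : ℕ), R f (n + 1) = f n)
    (hP : ∀ (i : ℕ) (f : lp (fun _ : ℕ => Y) p) (n : ℕ), P i f n = if n = i then f n else 0)
    (T : lp (fun _ : ℕ => Y) p →L[ℂ] lp (fun _ : ℕ => Y) p) (i j : ℕ) :
    ∃ S : lp (fun _ : ℕ => Y) p →L[ℂ] lp (fun _ : ℕ => Y) p,
      ∀ x : lp (fun _ : ℕ => Y) p,
        Tendsto (fun N => ∑ n ∈ Finset.range N, (R ^ n * (P i * T * P j) * L ^ n) x)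
          atTop (𝓝 (S x)) :=
  strong_convergence_PiTPj_general p hp L R P hL hR0 hR hP T i j
end

section
/- Let Z = (∑ Y)_p for 1 ≤ p < ∞, with shifts L, R and P₀ the projection onto the zeroth coordinate. For any T ∈ L(Z), the operator T P₀ is a commutator: explicitly, with S_A = ∑_{n=0}^∞ Rⁿ (P₀TP₀) Lⁿ (strongly convergent), T P₀ = R·(L T P₀ − S_A L) − (L T P₀ − S_A L)·R. -/
open ENNReal Filter Topology

/-
With `A = P₀ T P₀`, the series `S_A = ∑ Rⁿ A Lⁿ` telescopes under conjugation by the shift: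
`R S_A L = S_A − A`. Together with `L R = 1`, `R L = 1 − P₀` and `P₀ R = 0` the claim is a
ring identity: expanding `[R, L T P₀ − S_A L]` gives
`(1 − P₀) T P₀ − (S_A − A) − L T P₀ R + S_A L R = T P₀`.
-/

theorem mul_eq_commutator_of_shifts {A : Type*} [Ring A] {L R P T S : A}
    (hLR : L * R = 1) (hRL : R * L = 1 - P) (hPR : P * R = 0)
    (hS : R * (S * L) = S - P * T * P) :
    T * P = R * (L * T * P - S * L) - (L * T * P - S * L) * R :=
  calc T * P
      = (1 - P) * T * P - (S - P * T * P) - (L * T * 0 - S * 1) := by noncomm_ring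
    _ = (R * L) * T * P - R * (S * L) - (L * T * (P * R) - S * (L * R)) := by
        rw [hRL, hS, hPR, hLR]
    _ = R * (L * T * P - S * L) - (L * T * P - S * L) * R := by noncomm_ring

theorem ContinuousLinearMap.mul_mul_eq_sub_of_tendsto_sum {𝕜 E : Type*} [Ring 𝕜]
    [TopologicalSpace E] [AddCommGroup E] [IsTopologicalAddGroup E] [T2Space E] [Module 𝕜 E]
    {L R A S : E →L[𝕜] E}
    (hS : ∀ x, Tendsto (fun N => ∑ n ∈ Finset.range N, (R ^ n * A * L ^ n) x) atTop (𝓝 (S x))) :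
    R * (S * L) = S - A := by
  ext x
  have telescope : ∀ N, R (∑ n ∈ Finset.range N, (R ^ n * A * L ^ n) (L x)) =
      ∑ n ∈ Finset.range (N + 1), (R ^ n * A * L ^ n) x - A x := by
    intro N
    rw [map_sum, Finset.sum_range_succ', pow_zero, pow_zero, one_mul, mul_one,
      add_sub_cancel_right]
    refine Finset.sum_congr rfl fun n _ => ?_
    rw [pow_succ' R, pow_succ L]
    rfl
  have lim_conj : Tendsto (fun N => ∑ n ∈ Finset.range (N + 1), (R ^ n * A * L ^ n) x - A x)
      atTop (𝓝 (R (S (L x)))) := by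
    simpa only [Function.comp_def, telescope] using (R.continuous.tendsto _).comp (hS (L x))
  have lim_shift : Tendsto (fun N => ∑ n ∈ Finset.range (N + 1), (R ^ n * A * L ^ n) x - A x)
      atTop (𝓝 (S x - A x)) :=
    ((hS x).comp (tendsto_add_atTop_nat 1)).sub_const _
  exact tendsto_nhds_unique lim_conj lim_shift

namespace lp

variable {𝕜 Y : Type*} [NormedField 𝕜] [NormedAddCommGroup Y] [NormedSpace 𝕜 Y]
  {p : ℝ≥0∞} [Fact (1 ≤ p)] {L R P0 : lp (fun _ : ℕ => Y) p →L[𝕜] lp (fun _ : ℕ => Y) p}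

theorem shiftLeft_mul_shiftRight (hL : ∀ f n, L f n = f (n + 1))
    (hR : ∀ f n, R f (n + 1) = f n) : L * R = 1 := by
  ext f n
  simp [hL, hR]

theorem shiftRight_mul_shiftLeft (hL : ∀ f n, L f n = f (n + 1)) (hR0 : ∀ f, R f 0 = 0)
    (hR : ∀ f n, R f (n + 1) = f n) (hP0 : ∀ f, P0 f 0 = f 0)
    (hP : ∀ f n, P0 f (n + 1) = 0) : R * L = 1 - P0 := by
  ext f n
  cases n with
  | zero => simp [hR0, hP0]
  | succ n => simp [hR, hL, hP]

theorem projZero_mul_shiftRight (hR0 : ∀ f, R f 0 = 0) (hP0 : ∀ f, P0 f 0 = f 0)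
    (hP : ∀ f n, P0 f (n + 1) = 0) : P0 * R = 0 := by
  ext f n
  cases n with
  | zero => simp [hP0, hR0]
  | succ n => simp [hP]

end lp

theorem TP0_commutator_general {Y : Type*} [NormedAddCommGroup Y] [NormedSpace ℂ Y]
    (p : ℝ≥0∞) [Fact (1 ≤ p)]
    (L R P0 : lp (fun _ : ℕ => Y) p →L[ℂ] lp (fun _ : ℕ => Y) p)
    (hL : ∀ (f : lp (fun _ : ℕ => Y) p) (n : ℕ), L f n = f (n + 1))
    (hR0 : ∀ f : lp (fun _ : ℕ => Y) p, R f 0 = 0)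
    (hR : ∀ (f : lp (fun _ : ℕ => Y) p) (n : ℕ), R f (n + 1) = f n)
    (hP0 : ∀ f : lp (fun _ : ℕ => Y) p, P0 f 0 = f 0)
    (hP : ∀ (f : lp (fun _ : ℕ => Y) p) (n : ℕ), P0 f (n + 1) = 0)
    (T SA : lp (fun _ : ℕ => Y) p →L[ℂ] lp (fun _ : ℕ => Y) p)
    (hSA : ∀ x : lp (fun _ : ℕ => Y) p,
      Tendsto (fun N => ∑ n ∈ Finset.range N, (R ^ n * (P0 * T * P0) * L ^ n) x)
        atTop (𝓝 (SA x))) :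
    T * P0 = R * (L * T * P0 - SA * L) - (L * T * P0 - SA * L) * R :=
  mul_eq_commutator_of_shifts (lp.shiftLeft_mul_shiftRight hL hR)
    (lp.shiftRight_mul_shiftLeft hL hR0 hR hP0 hP) (lp.projZero_mul_shiftRight hR0 hP0 hP)
    (ContinuousLinearMap.mul_mul_eq_sub_of_tendsto_sum hSA)

/-- For `Z = (∑ Y)_p`, `1 ≤ p < ∞`, and `T ∈ L(Z)`: with `S_A = ∑ₙ Rⁿ (P₀ T P₀) Lⁿ`
(strongly convergent), `T P₀ = R (L T P₀ − S_A L) − (L T P₀ − S_A L) R`,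
so `T P₀` is a commutator. -/
theorem TP0_commutator {Y : Type*} [NormedAddCommGroup Y] [NormedSpace ℂ Y]
    [CompleteSpace Y] (p : ℝ≥0∞) [Fact (1 ≤ p)] (hp : p ≠ ∞)
    (L R P0 : lp (fun _ : ℕ => Y) p →L[ℂ] lp (fun _ : ℕ => Y) p)
    (hL : ∀ (f : lp (fun _ : ℕ => Y) p) (n : ℕ), L f n = f (n + 1))
    (hR0 : ∀ f : lp (fun _ : ℕ => Y) p, R f 0 = 0)
    (hR : ∀ (f : lp (fun _ : ℕ => Y) p) (n : ℕ), R f (n + 1) = f n)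
    (hP0 : ∀ f : lp (fun _ : ℕ => Y) p, P0 f 0 = f 0)
    (hP : ∀ (f : lp (fun _ : ℕ => Y) p) (n : ℕ), P0 f (n + 1) = 0)
    (T SA : lp (fun _ : ℕ => Y) p →L[ℂ] lp (fun _ : ℕ => Y) p)
    (hSA : ∀ x : lp (fun _ : ℕ => Y) p,
      Tendsto (fun N => ∑ n ∈ Finset.range N, (R ^ n * (P0 * T * P0) * L ^ n) x)
        atTop (𝓝 (SA x))) :
    T * P0 = R * (L * T * P0 - SA * L) - (L * T * P0 - SA * L) * R :=
  TP0_commutator_general p L R P0 hL hR0 hR hP0 hP T SA hSA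
end

section
/- Let Z = (∑ Y)_∞ be the ℓ_∞-sum of copies of a Banach space Y, with shifts L, R and zeroth-coordinate projection P₀. For any T ∈ L(Z), the series S₀ = ∑_{n=0}^∞ Rⁿ P₀ T Lⁿ converges coordinatewise (in the product topology) to a bounded operator on Z with ‖S₀‖ ≤ ‖T‖, and the resulting operator S₀ satisfies L S₀ = S₀ L and (I − RL) S₀ = P₀ T. -/
open ENNReal Filter Topology

/-! The `n`-th term `Rⁿ P₀ T Lⁿ x` of the series is supported in coordinate `n`, where it
equals `(T Lⁿ x)₀`. Hence the coordinatewise sum is `S₀ x = (k ↦ (T Lᵏ x)₀)`, whose entries are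
bounded by `‖T‖ ‖x‖` since `L` is a contraction, and the two identities are checked
coordinate by coordinate. -/

namespace ContinuousLinearMap

variable {𝕜 E α : Type*} {F : α → Type*} [NontriviallyNormedField 𝕜] [SeminormedAddCommGroup E]
  [NormedSpace 𝕜 E] [∀ i, NormedAddCommGroup (F i)] [∀ i, NormedSpace 𝕜 (F i)] [Nonempty α]

noncomputable def lpInftyPi (Φ : ∀ i, E →L[𝕜] F i) (C : ℝ) (hΦ : ∀ i x, ‖Φ i x‖ ≤ C * ‖x‖) :
    E →L[𝕜] lp F ∞ :=
  LinearMap.mkContinuous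
    { toFun x := ⟨fun i => Φ i x, memℓp_infty ⟨C * ‖x‖, by rintro - ⟨i, rfl⟩; exact hΦ i x⟩⟩
      map_add' x y := lp.ext <| funext fun i => map_add (Φ i) x y
      map_smul' c x := lp.ext <| funext fun i => map_smul (Φ i) c x }
    C fun x => lp.norm_le_of_forall_le' _ (hΦ · x)

@[simp]
theorem lpInftyPi_apply (Φ : ∀ i, E →L[𝕜] F i) (C : ℝ) (hΦ : ∀ i x, ‖Φ i x‖ ≤ C * ‖x‖)
    (x : E) (i : α) : lpInftyPi Φ C hΦ x i = Φ i x :=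
  rfl

theorem norm_lpInftyPi_le (Φ : ∀ i, E →L[𝕜] F i) {C : ℝ} (hC : 0 ≤ C)
    (hΦ : ∀ i x, ‖Φ i x‖ ≤ C * ‖x‖) : ‖lpInftyPi Φ C hΦ‖ ≤ C :=
  LinearMap.mkContinuous_norm_le _ hC _

end ContinuousLinearMap

section Shifts

variable {𝕜 Y : Type*} [NormedField 𝕜] [NormedAddCommGroup Y] [NormedSpace 𝕜 Y]
  {L R P0 : lp (fun _ : ℕ => Y) ∞ →L[𝕜] lp (fun _ : ℕ => Y) ∞}

theorem shift_left_pow_apply (hL : ∀ (f : lp (fun _ : ℕ => Y) ∞) (n : ℕ), L f n = f (n + 1))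
    (k : ℕ) (f : lp (fun _ : ℕ => Y) ∞) (n : ℕ) : (L ^ k) f n = f (n + k) := by
  induction k generalizing f with
  | zero => rfl
  | succ k ih => rw [pow_succ, mul_apply_eq_comp, ih, hL, Nat.add_assoc]

theorem norm_shift_left_pow_apply_le
    (hL : ∀ (f : lp (fun _ : ℕ => Y) ∞) (n : ℕ), L f n = f (n + 1))
    (k : ℕ) (f : lp (fun _ : ℕ => Y) ∞) : ‖(L ^ k) f‖ ≤ ‖f‖ :=
  lp.norm_le_of_forall_le (norm_nonneg f) fun n => by
    rw [shift_left_pow_apply hL]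
    exact lp.norm_apply_le_norm top_ne_zero f _

theorem shift_right_pow_proj_zero_apply (hR0 : ∀ f : lp (fun _ : ℕ => Y) ∞, R f 0 = 0)
    (hR : ∀ (f : lp (fun _ : ℕ => Y) ∞) (n : ℕ), R f (n + 1) = f n)
    (hP0 : ∀ f : lp (fun _ : ℕ => Y) ∞, P0 f 0 = f 0)
    (hP : ∀ (f : lp (fun _ : ℕ => Y) ∞) (n : ℕ), P0 f (n + 1) = 0)
    (n : ℕ) (f : lp (fun _ : ℕ => Y) ∞) (k : ℕ) :
    (R ^ n) (P0 f) k = if k = n then f 0 else 0 := by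
  induction n generalizing k with
  | zero => cases k <;> simp [hP0, hP]
  | succ n ih =>
    rw [pow_succ', mul_apply_eq_comp]
    cases k with
    | zero => exact hR0 _
    | succ k => simp only [hR, ih, Nat.add_right_cancel_iff]

end Shifts

theorem linfty_sum_S0_general {Y : Type*} [NormedAddCommGroup Y] [NormedSpace ℂ Y]
    (L R P0 : lp (fun _ : ℕ => Y) ∞ →L[ℂ] lp (fun _ : ℕ => Y) ∞)
    (hL : ∀ (f : lp (fun _ : ℕ => Y) ∞) (n : ℕ), L f n = f (n + 1))
    (hR0 : ∀ f : lp (fun _ : ℕ => Y) ∞, R f 0 = 0)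
    (hR : ∀ (f : lp (fun _ : ℕ => Y) ∞) (n : ℕ), R f (n + 1) = f n)
    (hP0 : ∀ f : lp (fun _ : ℕ => Y) ∞, P0 f 0 = f 0)
    (hP : ∀ (f : lp (fun _ : ℕ => Y) ∞) (n : ℕ), P0 f (n + 1) = 0)
    (T : lp (fun _ : ℕ => Y) ∞ →L[ℂ] lp (fun _ : ℕ => Y) ∞) :
    ∃ S0 : lp (fun _ : ℕ => Y) ∞ →L[ℂ] lp (fun _ : ℕ => Y) ∞,
      ‖S0‖ ≤ ‖T‖ ∧
      (∀ (x : lp (fun _ : ℕ => Y) ∞) (k : ℕ),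
        Tendsto (fun N => (∑ n ∈ Finset.range N, (R ^ n * (P0 * T) * L ^ n) x : lp (fun _ : ℕ => Y) ∞) k)
          atTop (𝓝 (S0 x k))) ∧
      L * S0 = S0 * L ∧ (1 - R * L) * S0 = P0 * T := by
  let Φ : ℕ → lp (fun _ : ℕ => Y) ∞ →L[ℂ] Y := fun k => lp.evalCLM ℂ _ ∞ 0 ∘L T ∘L L ^ k
  have hΦ : ∀ k x, ‖Φ k x‖ ≤ ‖T‖ * ‖x‖ := fun k x =>
    (lp.norm_apply_le_norm top_ne_zero _ 0).trans <|
      (T.le_opNorm _).trans <| by gcongr; exact norm_shift_left_pow_apply_le hL k x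
  have hterm : ∀ n x k, ((R ^ n * (P0 * T) * L ^ n) x) k = if k = n then Φ n x else 0 :=
    fun n x k => shift_right_pow_proj_zero_apply hR0 hR hP0 hP n _ k
  refine ⟨.lpInftyPi Φ ‖T‖ hΦ, ContinuousLinearMap.norm_lpInftyPi_le Φ (norm_nonneg T) hΦ,
    fun x k => ?_, ?_, ?_⟩
  · refine tendsto_atTop_of_eventually_const (i₀ := k + 1) fun N hN => ?_
    rw [lp.coeFn_sum, Finset.sum_apply, Finset.sum_congr rfl fun n _ => hterm n x k,
      Finset.sum_ite_eq, if_pos (Finset.mem_range.2 hN)]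
    rfl
  · ext x k
    simp only [mul_apply_eq_comp, hL, ContinuousLinearMap.lpInftyPi_apply, Φ,
      ContinuousLinearMap.comp_apply, pow_succ]
  · ext x (_ | k)
    · simp only [sub_apply, mul_apply_eq_comp, one_apply_eq_self,
        lp.coeFn_sub, Pi.sub_apply, hR0, hP0, sub_zero]
      rfl
    · simp only [sub_apply, mul_apply_eq_comp, one_apply_eq_self,
        lp.coeFn_sub, Pi.sub_apply, hR, hL, hP, sub_self]

/-- For `Z = (∑ Y)_∞` and `T ∈ L(Z)`, the series `S₀ = ∑ₙ Rⁿ P₀ T Lⁿ` converges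
coordinatewise to a bounded operator `S₀` with `‖S₀‖ ≤ ‖T‖`, which satisfies
`L S₀ = S₀ L` and `(I − RL) S₀ = P₀ T`. -/
theorem linfty_sum_S0 {Y : Type*} [NormedAddCommGroup Y] [NormedSpace ℂ Y]
    [CompleteSpace Y]
    (L R P0 : lp (fun _ : ℕ => Y) ∞ →L[ℂ] lp (fun _ : ℕ => Y) ∞)
    (hL : ∀ (f : lp (fun _ : ℕ => Y) ∞) (n : ℕ), L f n = f (n + 1))
    (hR0 : ∀ f : lp (fun _ : ℕ => Y) ∞, R f 0 = 0)
    (hR : ∀ (f : lp (fun _ : ℕ => Y) ∞) (n : ℕ), R f (n + 1) = f n)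
    (hP0 : ∀ f : lp (fun _ : ℕ => Y) ∞, P0 f 0 = f 0)
    (hP : ∀ (f : lp (fun _ : ℕ => Y) ∞) (n : ℕ), P0 f (n + 1) = 0)
    (T : lp (fun _ : ℕ => Y) ∞ →L[ℂ] lp (fun _ : ℕ => Y) ∞) :
    ∃ S0 : lp (fun _ : ℕ => Y) ∞ →L[ℂ] lp (fun _ : ℕ => Y) ∞,
      ‖S0‖ ≤ ‖T‖ ∧
      (∀ (x : lp (fun _ : ℕ => Y) ∞) (k : ℕ),
        Tendsto (fun N => (∑ n ∈ Finset.range N, (R ^ n * (P0 * T) * L ^ n) x : lp (fun _ : ℕ => Y) ∞) k)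
          atTop (𝓝 (S0 x k))) ∧
      L * S0 = S0 * L ∧ (1 - R * L) * S0 = P0 * T :=
  linfty_sum_S0_general L R P0 hL hR0 hR hP0 hP T
end

section
/- Let Z = (∑ Y)_∞ with shifts L, R and zeroth-coordinate projection P₀. For any T ∈ L(Z), P₀ T is a commutator: P₀ T = L (R S₀) − (R S₀) L, where S₀ is the coordinatewise sum ∑_{n=0}^∞ Rⁿ P₀ T Lⁿ. -/
open ENNReal Filter Topology

/-!
Only the `n = k` term of `∑ₙ Rⁿ P₀ T Lⁿ` survives in coordinate `k`, so `(S₀ x)ₖ = (T Lᵏ x)₀`.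
Since `L R = 1`, the commutator is `S₀ - R S₀ L`; and `(R S₀ L x)ₖ₊₁ = (T Lᵏ⁺¹ x)₀ = (S₀ x)ₖ₊₁`
while `(R S₀ L x)₀ = 0`, so the commutator keeps only the zeroth coordinate `(T x)₀` of `S₀ x`.
-/

section ShiftOperators

variable {𝕜 Y : Type*} [NontriviallyNormedField 𝕜] [NormedAddCommGroup Y] [NormedSpace 𝕜 Y]
  {p : ℝ≥0∞} [Fact (1 ≤ p)] {R : lp (fun _ : ℕ => Y) p →L[𝕜] lp (fun _ : ℕ => Y) p}

theorem rightShift_pow_apply_add (hR : ∀ f n, R f (n + 1) = f n) (n : ℕ)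
    (f : lp (fun _ : ℕ => Y) p) (m : ℕ) : (R ^ n) f (n + m) = f m := by
  induction n generalizing f m with
  | zero => rw [pow_zero, zero_add]; rfl
  | succ n ih => rw [pow_succ, mul_apply_eq_comp, add_right_comm, add_assoc, ih, hR]

theorem rightShift_pow_apply_of_lt (hR0 : ∀ f, R f 0 = 0) (hR : ∀ f n, R f (n + 1) = f n)
    {n k : ℕ} (hk : k < n) (f : lp (fun _ : ℕ => Y) p) : (R ^ n) f k = 0 := by
  obtain ⟨m, rfl⟩ := Nat.exists_eq_add_of_lt hk
  rw [add_assoc, pow_add, mul_apply_eq_comp]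
  simpa only [add_zero, pow_succ', mul_apply_eq_comp, hR0] using
    rightShift_pow_apply_add hR k ((R ^ (m + 1)) f) 0

theorem rightShift_pow_projection_apply (hR0 : ∀ f, R f 0 = 0) (hR : ∀ f n, R f (n + 1) = f n)
    {P0 : lp (fun _ : ℕ => Y) p →L[𝕜] lp (fun _ : ℕ => Y) p} (hP0 : ∀ f, P0 f 0 = f 0)
    (hP : ∀ f n, P0 f (n + 1) = 0) (n k : ℕ) (f : lp (fun _ : ℕ => Y) p) :
    (R ^ n) (P0 f) k = if n = k then f 0 else 0 := by
  rcases lt_trichotomy n k with h | rfl | h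
  · obtain ⟨m, rfl⟩ := Nat.exists_eq_add_of_lt h
    rw [if_neg h.ne, add_assoc, rightShift_pow_apply_add hR, hP]
  · rw [if_pos rfl]
    simpa only [add_zero, hP0] using rightShift_pow_apply_add hR n (P0 f) 0
  · rw [if_neg h.ne', rightShift_pow_apply_of_lt hR0 hR h]

variable {P0 : lp (fun _ : ℕ => Y) p →L[𝕜] lp (fun _ : ℕ => Y) p}

theorem sum_rightShift_pow_projection_apply_eventually_eq (hR0 : ∀ f, R f 0 = 0)
    (hR : ∀ f n, R f (n + 1) = f n) (hP0 : ∀ f, P0 f 0 = f 0) (hP : ∀ f n, P0 f (n + 1) = 0)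
    (g : ℕ → lp (fun _ : ℕ => Y) p) (k : ℕ) :
    (fun N => (∑ n ∈ Finset.range N, (R ^ n) (P0 (g n)) : lp (fun _ : ℕ => Y) p) k)
      =ᶠ[atTop] fun _ => g k 0 := by
  filter_upwards [eventually_gt_atTop k] with N hN
  simp only [lp.coeFn_sum, Finset.sum_apply,
    rightShift_pow_projection_apply hR0 hR hP0 hP, Finset.sum_ite_eq', Finset.mem_range, if_pos hN]

theorem projection_comp_eq_commutator {L : lp (fun _ : ℕ => Y) p →L[𝕜] lp (fun _ : ℕ => Y) p}
    (hL : ∀ f n, L f n = f (n + 1)) (hR0 : ∀ f, R f 0 = 0) (hR : ∀ f n, R f (n + 1) = f n)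
    (hP0 : ∀ f, P0 f 0 = f 0) (hP : ∀ f n, P0 f (n + 1) = 0)
    {T S : lp (fun _ : ℕ => Y) p →L[𝕜] lp (fun _ : ℕ => Y) p}
    (hS : ∀ x k, S x k = T ((L ^ k) x) 0) :
    P0 * T = L * (R * S) - R * S * L := by
  ext x k
  simp only [sub_apply, mul_apply_eq_comp, lp.coeFn_sub, Pi.sub_apply, hL, hR]
  cases k with
  | zero => rw [hP0, hR0, hS, pow_zero, sub_zero]; rfl
  | succ k => rw [hP, hR, hS, hS, pow_succ, mul_apply_eq_comp, sub_self]

end ShiftOperators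

theorem linfty_P0T_commutator_general {Y : Type*} [NormedAddCommGroup Y] [NormedSpace ℂ Y]
    (L R P0 : lp (fun _ : ℕ => Y) ∞ →L[ℂ] lp (fun _ : ℕ => Y) ∞)
    (hL : ∀ (f : lp (fun _ : ℕ => Y) ∞) (n : ℕ), L f n = f (n + 1))
    (hR0 : ∀ f : lp (fun _ : ℕ => Y) ∞, R f 0 = 0)
    (hR : ∀ (f : lp (fun _ : ℕ => Y) ∞) (n : ℕ), R f (n + 1) = f n)
    (hP0 : ∀ f : lp (fun _ : ℕ => Y) ∞, P0 f 0 = f 0)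
    (hP : ∀ (f : lp (fun _ : ℕ => Y) ∞) (n : ℕ), P0 f (n + 1) = 0)
    (T S0 : lp (fun _ : ℕ => Y) ∞ →L[ℂ] lp (fun _ : ℕ => Y) ∞)
    (hS0 : ∀ (x : lp (fun _ : ℕ => Y) ∞) (k : ℕ),
      Tendsto (fun N => (∑ n ∈ Finset.range N, (R ^ n * (P0 * T) * L ^ n) x : lp (fun _ : ℕ => Y) ∞) k)
        atTop (𝓝 (S0 x k))) :
    P0 * T = L * (R * S0) - (R * S0) * L := by
  refine projection_comp_eq_commutator hL hR0 hR hP0 hP fun x k => tendsto_nhds_unique (hS0 x k) ?_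
  exact tendsto_const_nhds.congr' (sum_rightShift_pow_projection_apply_eventually_eq
    hR0 hR hP0 hP (fun n => T ((L ^ n) x)) k).symm

/-- For `Z = (∑ Y)_∞` and `T ∈ L(Z)`: with `S₀` the coordinatewise sum of
`∑ₙ Rⁿ P₀ T Lⁿ`, we have `P₀ T = L (R S₀) − (R S₀) L`, so `P₀ T` is a commutator. -/
theorem linfty_P0T_commutator {Y : Type*} [NormedAddCommGroup Y] [NormedSpace ℂ Y]
    [CompleteSpace Y]
    (L R P0 : lp (fun _ : ℕ => Y) ∞ →L[ℂ] lp (fun _ : ℕ => Y) ∞)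
    (hL : ∀ (f : lp (fun _ : ℕ => Y) ∞) (n : ℕ), L f n = f (n + 1))
    (hR0 : ∀ f : lp (fun _ : ℕ => Y) ∞, R f 0 = 0)
    (hR : ∀ (f : lp (fun _ : ℕ => Y) ∞) (n : ℕ), R f (n + 1) = f n)
    (hP0 : ∀ f : lp (fun _ : ℕ => Y) ∞, P0 f 0 = f 0)
    (hP : ∀ (f : lp (fun _ : ℕ => Y) ∞) (n : ℕ), P0 f (n + 1) = 0)
    (T S0 : lp (fun _ : ℕ => Y) ∞ →L[ℂ] lp (fun _ : ℕ => Y) ∞)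
    (hS0 : ∀ (x : lp (fun _ : ℕ => Y) ∞) (k : ℕ),
      Tendsto (fun N => (∑ n ∈ Finset.range N, (R ^ n * (P0 * T) * L ^ n) x : lp (fun _ : ℕ => Y) ∞) k)
        atTop (𝓝 (S0 x k))) :
    P0 * T = L * (R * S0) - (R * S0) * L :=
  linfty_P0T_commutator_general L R P0 hL hR0 hR hP0 hP T S0 hS0
end

section
/- Let X be a unital Banach algebra and I a closed proper two-sided ideal of X. Then for every λ ≠ 0 and every S ∈ I, the element λ·1 + S is not a commutator: there do not exist A, B ∈ X with λ·1 + S = AB − BA. -/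
/-!
Pass to the quotient `X ⧸ I`: since `I` is closed and proper it is a nontrivial normed algebra,
in which `λ⁻¹ • A` and `B` have commutator `1`. This is impossible by Wintner's argument: from
`a * b - b * a = 1` one gets `a * b ^ (n + 1) - b ^ (n + 1) * a = (n + 1) • b ^ n`, so no power
of `b` vanishes and `(n + 1) * ‖b ^ n‖ ≤ 2 * ‖a‖ * ‖b‖ * ‖b ^ n‖` for every `n`.
-/

open Filter Topology

theorem mul_pow_sub_pow_mul_of_mul_sub_mul_eq_one {A : Type*} [Ring A] {a b : A}
    (h : a * b - b * a = 1) (n : ℕ) : a * b ^ (n + 1) - b ^ (n + 1) * a = (n + 1) • b ^ n := by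
  induction n with
  | zero => simpa using h
  | succ n ih =>
    calc a * b ^ (n + 2) - b ^ (n + 2) * a
        = (a * b ^ (n + 1) - b ^ (n + 1) * a) * b + b ^ (n + 1) * (a * b - b * a) := by
          rw [pow_succ b (n + 1)]; noncomm_ring
      _ = (n + 2) • b ^ (n + 1) := by
          rw [ih, h, smul_mul_assoc, ← pow_succ, mul_one, ← succ_nsmul]

section Wintner

variable {A : Type*} [NormedRing A] [NormedSpace ℝ A] [Nontrivial A]

theorem pow_ne_zero_of_mul_sub_mul_eq_one {a b : A} (h : a * b - b * a = 1) (n : ℕ) :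
    b ^ n ≠ 0 := by
  induction n with
  | zero => simp
  | succ n ih =>
    intro hb
    have : ‖(n + 1) • b ^ n‖ = 0 := by
      rw [← mul_pow_sub_pow_mul_of_mul_sub_mul_eq_one h n, hb]; simp
    rw [RCLike.norm_nsmul ℝ] at this
    exact ih (norm_eq_zero.mp ((smul_eq_zero.mp this).resolve_left n.succ_ne_zero))

theorem mul_sub_mul_ne_one (a b : A) : a * b - b * a ≠ 1 := by
  intro h
  have bound (n : ℕ) : (n + 1 : ℝ) ≤ 2 * ‖a‖ * ‖b‖ := by
    have hpos : 0 < ‖b ^ n‖ := norm_pos_iff.mpr (pow_ne_zero_of_mul_sub_mul_eq_one h n)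
    refine le_of_mul_le_mul_right ?_ hpos
    calc (n + 1 : ℝ) * ‖b ^ n‖ = ‖a * b ^ (n + 1) - b ^ (n + 1) * a‖ := by
          rw [mul_pow_sub_pow_mul_of_mul_sub_mul_eq_one h, RCLike.norm_nsmul ℝ, nsmul_eq_mul]
          push_cast; ring
      _ ≤ ‖a‖ * ‖b ^ (n + 1)‖ + ‖b ^ (n + 1)‖ * ‖a‖ :=
          (norm_sub_le _ _).trans (add_le_add (norm_mul_le _ _) (norm_mul_le _ _))
      _ ≤ ‖a‖ * (‖b ^ n‖ * ‖b‖) + ‖b ^ n‖ * ‖b‖ * ‖a‖ := by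
          have := pow_succ b n ▸ norm_mul_le (b ^ n) b
          gcongr
      _ = 2 * ‖a‖ * ‖b‖ * ‖b ^ n‖ := by ring
  obtain ⟨n, hn⟩ := exists_nat_gt (2 * ‖a‖ * ‖b‖)
  linarith [bound n]

end Wintner

noncomputable section QuotientNorm

variable {R : Type*} [SeminormedRing R] (I : Ideal R) [I.IsTwoSided]

-- Mathlib only provides the commutative case, `Ideal.Quotient.semiNormedCommRing`.
instance Ideal.Quotient.seminormedRing : SeminormedRing (R ⧸ I) where
  __ := Submodule.Quotient.seminormedAddCommGroup I
  __ := Ideal.Quotient.ring I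
  norm_mul_le x y := by
    have approx (ε : ℝ) (hε : 0 < ε) : ‖x * y‖ ≤ (‖x‖ + ε) * (‖y‖ + ε) := by
      obtain ⟨a, rfl, ha⟩ := Submodule.Quotient.norm_mk_lt x hε
      obtain ⟨b, rfl, hb⟩ := Submodule.Quotient.norm_mk_lt y hε
      calc _ ≤ ‖a * b‖ := Submodule.Quotient.norm_mk_le I (a * b)
        _ ≤ ‖a‖ * ‖b‖ := norm_mul_le a b
        _ ≤ _ := by gcongr
    have hlim : Tendsto (fun ε : ℝ ↦ (‖x‖ + ε) * (‖y‖ + ε)) (𝓝[>] 0) (𝓝 (‖x‖ * ‖y‖)) := by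
      refine tendsto_nhdsWithin_of_tendsto_nhds ?_
      have : Continuous fun ε : ℝ ↦ (‖x‖ + ε) * (‖y‖ + ε) := by fun_prop
      simpa using this.tendsto 0
    exact ge_of_tendsto hlim (eventually_nhdsWithin_of_forall approx)

instance Ideal.Quotient.normedRing [IsClosed (I : Set R)] : NormedRing (R ⧸ I) where
  __ := Ideal.Quotient.seminormedRing I
  __ := Submodule.Quotient.normedAddCommGroup I

end QuotientNorm

theorem smul_one_add_ideal_not_commutator_general {X : Type*} [NormedRing X] [NormedAlgebra ℂ X]
    (I : TwoSidedIdeal X) (hIc : IsClosed (I : Set X))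
    (hIp : I ≠ ⊤) :
    ∀ lam : ℂ, lam ≠ 0 → ∀ S ∈ I, ¬ ∃ A B : X, lam • (1 : X) + S = A * B - B * A := by
  rintro lam hlam S hS ⟨A, B, hAB⟩
  have : IsClosed (I.asIdeal : Set X) := hIc
  have : Nontrivial (X ⧸ I.asIdeal) :=
    Ideal.Quotient.nontrivial_iff.mpr fun h ↦
      hIp (I.one_mem_iff.mp (I.mem_asIdeal.mp ((Ideal.eq_top_iff_one _).mp h)))
  set π := Ideal.Quotient.mkₐ ℂ I.asIdeal
  have hS0 : π S = 0 := Ideal.Quotient.eq_zero_iff_mem.mpr (I.mem_asIdeal.mpr hS)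
  apply mul_sub_mul_ne_one (π (lam⁻¹ • A)) (π B)
  calc π (lam⁻¹ • A) * π B - π B * π (lam⁻¹ • A) = lam⁻¹ • π (A * B - B * A) := by
        simp only [map_smul, map_sub, map_mul, smul_mul_assoc, mul_smul_comm, smul_sub]
    _ = 1 := by rw [← hAB, map_add, hS0, add_zero, map_smul, map_one, inv_smul_smul₀ hlam]

/-- In a unital Banach algebra `X` with a closed proper two-sided ideal `I`, no element of
the form `λ·1 + S` with `λ ≠ 0` and `S ∈ I` is a commutator. -/
theorem smul_one_add_ideal_not_commutator {X : Type*} [NormedRing X] [NormedAlgebra ℂ X]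
    [CompleteSpace X] [NormOneClass X] (I : TwoSidedIdeal X) (hIc : IsClosed (I : Set X))
    (hIp : I ≠ ⊤) :
    ∀ lam : ℂ, lam ≠ 0 → ∀ S ∈ I, ¬ ∃ A B : X, lam • (1 : X) + S = A * B - B * A :=
  smul_one_add_ideal_not_commutator_general I hIc hIp
end

section
/- Let X be a Banach space isomorphic to ℓ_p (1 ≤ p < ∞) or c₀, and T ∈ L(X). If there exists an infinite-dimensional closed subspace Y ⊆ X such that T restricted to Y is an isomorphism and d(Y, T(Y)) > 0, then T − λI is not compact for any scalar λ. -/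
open ENNReal ZeroAtInfty

/-!
If `T - λ` were compact, it would be bounded below on the infinite-dimensional subspace `Y`:
for `λ = 0` by hypothesis, and for `λ ≠ 0` because `λ⁻¹ T y ∈ T(Y)`, so
`‖T y - λ y‖ = ‖λ‖ ‖y - λ⁻¹ T y‖ ≥ ‖λ‖ d(Y, T(Y)) ‖y‖`. But a compact operator bounded below
on a subspace pulls a totally bounded neighbourhood of `0` back to one of the subspace, which
is then finite-dimensional by Riesz's theorem.
-/

section CompactOperator

variable {𝕜 E F : Type*} [NontriviallyNormedField 𝕜] [CompleteSpace 𝕜]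
  [NormedAddCommGroup E] [NormedSpace 𝕜 E] [NormedAddCommGroup F] [NormedSpace 𝕜 F]

theorem IsCompactOperator.finiteDimensional_of_antilipschitz {f : E →L[𝕜] F}
    (hf : IsCompactOperator f) {K : NNReal} (hK : AntilipschitzWith K f) :
    FiniteDimensional 𝕜 E := by
  obtain ⟨C, hC, hCnhds⟩ := hf
  have hinducing : IsUniformInducing f := hK.isUniformInducing f.uniformContinuous
  exact .of_totallyBounded_nhds_zero 𝕜 hCnhds
    (totallyBounded_preimage hinducing hC.totallyBounded)

theorem IsCompactOperator.finiteDimensional_of_mul_norm_le {f : E →L[𝕜] F}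
    (hf : IsCompactOperator f) (Y : Submodule 𝕜 E) {c : ℝ} (hc : 0 < c)
    (hbelow : ∀ y ∈ Y, c * ‖y‖ ≤ ‖f y‖) : FiniteDimensional 𝕜 Y := by
  refine (hf.comp_clm Y.subtypeL).finiteDimensional_of_antilipschitz
    ((f.comp Y.subtypeL).antilipschitz_of_bound (K := c.toNNReal⁻¹) fun y ↦ ?_)
  rw [NNReal.coe_inv, Real.coe_toNNReal _ hc.le, ← div_eq_inv_mul, le_div_iff₀' hc]
  exact hbelow y y.2

end CompactOperator

section SubspaceDist

variable {X : Type*} [NormedAddCommGroup X] [NormedSpace ℂ X] {Y W : Submodule ℂ X}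

theorem subspaceDist_le_norm_sub {x w : X} (hx : x ∈ Y) (hx1 : ‖x‖ = 1) (hw : w ∈ W) :
    subspaceDist Y W ≤ ‖x - w‖ :=
  csInf_le ⟨0, fun _ ⟨_, _, _, _, _, hr⟩ ↦ hr ▸ norm_nonneg _⟩ ⟨x, hx, hx1, w, hw, rfl⟩

theorem subspaceDist_mul_norm_le {y w : X} (hy : y ∈ Y) (hw : w ∈ W) :
    subspaceDist Y W * ‖y‖ ≤ ‖y - w‖ := by
  rcases eq_or_ne y 0 with rfl | hy0
  · simp
  have hny : 0 < ‖y‖ := norm_pos_iff.2 hy0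
  have hscaled := subspaceDist_le_norm_sub (Y.smul_mem ((‖y‖⁻¹ : ℝ) : ℂ) hy)
    (by simp [norm_smul, hny.ne']) (W.smul_mem ((‖y‖⁻¹ : ℝ) : ℂ) hw)
  rw [← smul_sub, norm_smul, Complex.norm_real, Real.norm_eq_abs, abs_inv, abs_norm,
    ← div_eq_inv_mul, le_div_iff₀ hny] at hscaled
  exact hscaled

theorem norm_mul_subspaceDist_mul_norm_le (T : X →ₗ[ℂ] X) (lam : ℂ) {y : X} (hy : y ∈ Y) :
    ‖lam‖ * subspaceDist Y (Y.map T) * ‖y‖ ≤ ‖T y - lam • y‖ := by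
  rcases eq_or_ne lam 0 with rfl | hlam
  · simp
  have hTy : lam⁻¹ • T y ∈ Y.map T := ⟨lam⁻¹ • y, Y.smul_mem _ hy, by simp⟩
  calc ‖lam‖ * subspaceDist Y (Y.map T) * ‖y‖
      = ‖lam‖ * (subspaceDist Y (Y.map T) * ‖y‖) := mul_assoc _ _ _
    _ ≤ ‖lam‖ * ‖y - lam⁻¹ • T y‖ :=
      mul_le_mul_of_nonneg_left (subspaceDist_mul_norm_le hy hTy) (norm_nonneg _)
    _ = ‖T y - lam • y‖ := by
      rw [← norm_smul, smul_sub, smul_inv_smul₀ hlam, norm_sub_rev]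

end SubspaceDist

theorem not_compact_of_moved_subspace_general {X : Type*} [NormedAddCommGroup X] [NormedSpace ℂ X]
    (T : X →L[ℂ] X) (Y : Submodule ℂ X)
    (hYinf : ¬ FiniteDimensional ℂ Y)
    (hiso : ∃ c > 0, ∀ y ∈ Y, c * ‖y‖ ≤ ‖T y‖)
    (hdist : 0 < subspaceDist Y (Y.map (T : X →ₗ[ℂ] X))) :
    ∀ lam : ℂ, ¬ IsCompactOperator (T - lam • ContinuousLinearMap.id ℂ X) := by
  intro lam hcompact
  obtain ⟨c, hc, hbelow⟩ :
      ∃ c > 0, ∀ y ∈ Y, c * ‖y‖ ≤ ‖(T - lam • ContinuousLinearMap.id ℂ X) y‖ := by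
    rcases eq_or_ne lam 0 with rfl | hlam
    · simpa using hiso
    · exact ⟨_, mul_pos (norm_pos_iff.2 hlam) hdist, fun y hy ↦ by
        simpa using norm_mul_subspaceDist_mul_norm_le (T : X →ₗ[ℂ] X) lam hy⟩
  exact hYinf (hcompact.finiteDimensional_of_mul_norm_le Y hc hbelow)

/-- Let `X` be isomorphic to `ℓ_p` (`1 ≤ p < ∞`) or `c₀` and `T ∈ L(X)`. If there is an
infinite-dimensional closed subspace `Y` on which `T` is an isomorphism with
`d(Y, T(Y)) > 0`, then `T − λI` is not compact for any `λ`. -/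
theorem not_compact_of_moved_subspace {X : Type*} [NormedAddCommGroup X] [NormedSpace ℂ X]
    [CompleteSpace X]
    (hX : (∃ p : ℝ≥0∞, ∃ _ : Fact (1 ≤ p), p ≠ ∞ ∧
            Nonempty (X ≃L[ℂ] lp (fun _ : ℕ => ℂ) p)) ∨
          Nonempty (X ≃L[ℂ] C₀(ℕ, ℂ)))
    (T : X →L[ℂ] X) (Y : Submodule ℂ X) (hYc : IsClosed (Y : Set X))
    (hYinf : ¬ FiniteDimensional ℂ Y)
    (hiso : ∃ c > 0, ∀ y ∈ Y, c * ‖y‖ ≤ ‖T y‖)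
    (hdist : 0 < subspaceDist Y (Y.map (T : X →ₗ[ℂ] X))) :
    ∀ lam : ℂ, ¬ IsCompactOperator (T - lam • ContinuousLinearMap.id ℂ X) :=
  not_compact_of_moved_subspace_general T Y hYinf hiso hdist
end

section
/- Every strictly singular bounded linear operator from c₀ into a Banach space Y is compact; equivalently, every non-compact bounded operator T : c₀ → Y is an isomorphism (bounded below) on some infinite-dimensional closed subspace of c₀ isomorphic to c₀. -/
/-!
If `T` is not compact it cannot be uniformly small on the tails of `c₀`, so there are normalized,
disjointly supported blocks `u k` with `‖T (u k)‖ ≥ δ`, normed by functionals `g k = f k ∘ T`.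
Against disjoint normalized blocks every functional has absolutely summable values,
`∑ j, ‖g (u j)‖ ≤ ‖g‖`, so a gliding-hump selection yields a subsequence whose off-diagonal
interactions `∑_{j ≠ k} ‖g k (u j)‖` are at most `δ / 2`. The closed span of the selected blocks is
an isometric copy of `c₀`, and for `z = ∑ a k • u k` testing `T z` against `g k` at a `k` with
`‖a k‖ = ‖a‖` gives `‖T z‖ ≥ δ / 2 * ‖z‖`.
-/

open ZeroAtInfty Filter Topology Function

lemma Summable.exists_forall_sum_lt {f : ℕ → ℝ} (hf : Summable f) {η : ℝ} (hη : 0 < η) :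
    ∃ N, ∀ t : Finset ℕ, (∀ j ∈ t, N ≤ j) → ∑ j ∈ t, f j < η := by
  obtain ⟨s, hs⟩ := hf.vanishing (Iio_mem_nhds hη)
  refine ⟨s.sup id + 1, fun t ht => hs t (Finset.disjoint_left.2 fun j hjt hjs => ?_)⟩
  exact (ht j hjt).not_gt (Nat.lt_succ_of_le (Finset.le_sup (f := id) hjs))

/- Row tails control the entries `M (s r) (s r')` with `r' > r`; the summable column limits `m`
control those with `r' < r`. -/
theorem exists_strictMono_sum_offDiag_le_of_tendsto {M : ℕ → ℕ → ℝ} {m : ℕ → ℝ}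
    (hM : ∀ k j, 0 ≤ M k j) (hrow : ∀ k, Summable (M k))
    (hcol : ∀ j, Tendsto (fun k => M k j) atTop (𝓝 (m j))) (hm : Summable m) {ε : ℝ}
    (hε : 0 < ε) :
    ∃ s : ℕ → ℕ, StrictMono s ∧ ∀ r (F : Finset ℕ), r ∉ F → ∑ r' ∈ F, M (s r) (s r') ≤ ε := by
  obtain ⟨N₀, hN₀⟩ := hm.exists_forall_sum_lt (half_pos hε)
  have hnext : ∀ p, ∃ k, p < k ∧ ∑ j ∈ Finset.Ico N₀ (p + 1), M k j ≤ ε / 2 ∧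
      ∀ t : Finset ℕ, (∀ j ∈ t, k ≤ j) → ∑ j ∈ t, M p j ≤ ε / 2 := by
    intro p
    obtain ⟨K, hK⟩ := (hrow p).exists_forall_sum_lt (half_pos hε)
    have hlim : Tendsto (fun k => ∑ j ∈ Finset.Ico N₀ (p + 1), M k j) atTop
        (𝓝 (∑ j ∈ Finset.Ico N₀ (p + 1), m j)) := tendsto_finsetSum _ fun j _ => hcol j
    obtain ⟨k, hk, hpk, hKk⟩ := ((hlim.eventually (gt_mem_nhds (hN₀ _ fun j hj =>
      (Finset.mem_Ico.1 hj).1))).and ((eventually_gt_atTop p).and (eventually_ge_atTop K))).exists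
    exact ⟨k, hpk, hk.le, fun t ht => (hK t fun j hj => hKk.trans (ht j hj)).le⟩
  choose next hlt hpast hfut using hnext
  let s : ℕ → ℕ := fun r => Nat.rec N₀ (fun _ p => next p) r
  have hs : StrictMono s := strictMono_nat_of_lt_succ fun r => hlt (s r)
  have hN₀s : ∀ r, N₀ ≤ s r := fun r => hs.monotone (Nat.zero_le r)
  refine ⟨s, hs, fun r F hr => ?_⟩
  have past : ∑ r' ∈ F with r' < r, M (s r) (s r') ≤ ε / 2 := by
    rcases r with _ | q
    · simpa using (half_pos hε).le
    rw [← Finset.sum_image (f := M (s (q + 1))) (hs.injective.injOn)]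
    refine (Finset.sum_le_sum_of_subset_of_nonneg ?_ fun _ _ _ => hM _ _).trans (hpast (s q))
    intro j hj
    obtain ⟨r', hr', rfl⟩ := Finset.mem_image.1 hj
    have hr'q : r' < q + 1 := (Finset.mem_filter.1 hr').2
    exact Finset.mem_Ico.2 ⟨hN₀s r', Nat.lt_succ_of_le (hs.monotone (Nat.le_of_lt_succ hr'q))⟩
  have future : ∑ r' ∈ F with ¬r' < r, M (s r) (s r') ≤ ε / 2 := by
    rw [← Finset.sum_image (f := M (s r)) (hs.injective.injOn)]
    refine hfut (s r) _ fun j hj => ?_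
    obtain ⟨r', hr', rfl⟩ := Finset.mem_image.1 hj
    obtain ⟨hr'F, hr'r⟩ := Finset.mem_filter.1 hr'
    have : r ≠ r' := fun h => hr (h ▸ hr'F)
    exact hs.monotone (show r + 1 ≤ r' by omega)
  rw [← Finset.sum_filter_add_sum_filter_not F (· < r)]
  linarith

theorem exists_strictMono_sum_offDiag_le {M : ℕ → ℕ → ℝ} {B : ℝ} (hM : ∀ k j, 0 ≤ M k j)
    (hrow : ∀ k (F : Finset ℕ), ∑ j ∈ F, M k j ≤ B) {ε : ℝ} (hε : 0 < ε) :
    ∃ s : ℕ → ℕ, StrictMono s ∧ ∀ r (F : Finset ℕ), r ∉ F → ∑ r' ∈ F, M (s r) (s r') ≤ ε := by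
  have hbdd : ∀ k, M k ∈ Set.univ.pi fun _ => Set.Icc 0 B :=
    fun k j _ => ⟨hM k j, by simpa using hrow k {j}⟩
  obtain ⟨m, -, φ, hφ, hlim⟩ := (isCompact_univ_pi fun _ => isCompact_Icc).isSeqCompact hbdd
  have hcol : ∀ j, Tendsto (fun k => M (φ k) j) atTop (𝓝 (m j)) := tendsto_pi_nhds.1 hlim
  have hm : Summable m := summable_of_sum_le (fun j => ge_of_tendsto' (hcol j) fun k => hM _ _)
    fun F => le_of_tendsto' (tendsto_finsetSum _ fun j _ => hcol j) fun k => hrow (φ k) F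
  obtain ⟨s, hs, hoff⟩ := exists_strictMono_sum_offDiag_le_of_tendsto
    (M := fun k j => M (φ k) (φ j)) (fun _ _ => hM _ _)
    (fun k => (summable_of_sum_le (hM (φ k)) (hrow (φ k))).comp_injective hφ.injective)
    (fun j => hcol (φ j)) (hm.comp_injective hφ.injective) hε
  exact ⟨φ ∘ s, hφ.comp hs, hoff⟩

namespace ZeroAtInftyContinuousMap

section General

variable {α β : Type*} [TopologicalSpace α] [NormedAddCommGroup β]

lemma norm_apply_le (x : C₀(α, β)) (i : α) : ‖x i‖ ≤ ‖x‖ := by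
  rw [← norm_toBCF_eq_norm]
  exact BoundedContinuousFunction.norm_coe_le_norm x.toBCF i

lemma norm_le_of_forall_apply_le {x : C₀(α, β)} {C : ℝ} (hC : 0 ≤ C) (h : ∀ i, ‖x i‖ ≤ C) :
    ‖x‖ ≤ C := by
  rw [← norm_toBCF_eq_norm]
  exact (BoundedContinuousFunction.norm_le hC).2 h

lemma exists_norm_apply_eq_norm [Nonempty α] (x : C₀(α, β)) : ∃ i, ‖x i‖ = ‖x‖ := by
  obtain rfl | ⟨i₀, hi₀⟩ : x = 0 ∨ ∃ i, x i ≠ 0 := by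
    by_contra! h
    exact h.1 (ext h.2)
  · exact ⟨Classical.arbitrary α, by simp⟩
  have hev : ∀ᶠ i in cocompact α, ‖x i‖ ≤ ‖x i₀‖ :=
    x.zero_at_infty'.norm.eventually (eventually_le_nhds (by simpa using hi₀))
  obtain ⟨i, hi⟩ := (map_continuous x).norm.exists_forall_ge' i₀ (by simpa using hev)
  exact ⟨i, (norm_apply_le x i).antisymm (norm_le_of_forall_apply_le (norm_nonneg _) hi)⟩

end General

variable {𝕜 : Type*} [RCLike 𝕜]

lemma tendsto_atTop (x : C₀(ℕ, 𝕜)) : Tendsto x atTop (𝓝 0) := by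
  simpa [cocompact_eq_atTop] using x.zero_at_infty'

noncomputable def single (i : ℕ) (c : 𝕜) : C₀(ℕ, 𝕜) where
  toFun := Pi.single i c
  continuous_toFun := continuous_of_discreteTopology
  zero_at_infty' := by
    rw [cocompact_eq_atTop]
    exact tendsto_const_nhds.congr' <| (eventually_gt_atTop i).mono fun _ hj => by simp [hj.ne']

@[simp] lemma single_apply (i : ℕ) (c : 𝕜) (j : ℕ) :
    single i c j = Pi.single (M := fun _ => 𝕜) i c j := rfl

variable (𝕜) in
noncomputable def evalCLM (i : ℕ) : C₀(ℕ, 𝕜) →L[𝕜] 𝕜 :=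
  LinearMap.mkContinuous { toFun x := x i, map_add' _ _ := rfl, map_smul' _ _ := rfl } 1
    fun x => by simpa using norm_apply_le x i

@[simp] lemma evalCLM_apply (i : ℕ) (x : C₀(ℕ, 𝕜)) : evalCLM 𝕜 i x = x i := rfl

lemma sum_apply {ι : Type*} (F : Finset ι) (x : ι → C₀(ℕ, 𝕜)) (i : ℕ) :
    (∑ r ∈ F, x r) i = ∑ r ∈ F, x r i :=
  map_sum (evalCLM 𝕜 i) x F

variable (𝕜) in
lemma linearIndependent_single_one : LinearIndependent 𝕜 fun i => single i (1 : 𝕜) := by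
  refine linearIndependent_iff'.2 fun F c hc i hi => ?_
  simpa [sum_apply, Pi.single_apply, hi] using congr($hc i)

variable (𝕜) in
noncomputable def truncCLM (n : ℕ) : C₀(ℕ, 𝕜) →L[𝕜] C₀(ℕ, 𝕜) :=
  ∑ i ∈ Finset.range n, ContinuousLinearMap.toSpanSingleton 𝕜 (single i 1) ∘L evalCLM 𝕜 i

lemma truncCLM_apply (n : ℕ) (x : C₀(ℕ, 𝕜)) (j : ℕ) :
    truncCLM 𝕜 n x j = if j < n then x j else 0 := by
  simp [truncCLM, sum_apply, Pi.single_apply]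

lemma isCompactOperator_truncCLM (n : ℕ) : IsCompactOperator (truncCLM 𝕜 n) :=
  Submodule.sum_mem (compactOperator _ _ _) fun i _ =>
    (isCompactOperator_of_locallyCompactSpace_dom (evalCLM 𝕜 i)).clm_comp
      (ContinuousLinearMap.toSpanSingleton 𝕜 (single i 1))

lemma norm_sub_truncCLM_le (n : ℕ) (x : C₀(ℕ, 𝕜)) : ‖x - truncCLM 𝕜 n x‖ ≤ ‖x‖ :=
  norm_le_of_forall_apply_le (norm_nonneg x) fun j => by
    by_cases hj : j < n <;> simp [truncCLM_apply, hj, norm_apply_le]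

lemma tendsto_truncCLM (x : C₀(ℕ, 𝕜)) : Tendsto (fun n => truncCLM 𝕜 n x) atTop (𝓝 x) := by
  refine Metric.tendsto_atTop.2 fun ε hε => ?_
  obtain ⟨N, hN⟩ := eventually_atTop.1
    ((tendsto_atTop x).norm.eventually (eventually_le_nhds (by rw [norm_zero]; exact half_pos hε)))
  refine ⟨N, fun n hn => lt_of_le_of_lt ?_ (half_lt_self hε)⟩
  rw [dist_eq_norm']
  refine norm_le_of_forall_apply_le (half_pos hε).le fun j => ?_
  by_cases hj : j < n
  · simp [truncCLM_apply, hj, (half_pos hε).le]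
  · simpa [truncCLM_apply, hj] using hN j (by omega)

section Operators

variable {Y : Type*} [NormedAddCommGroup Y] [NormedSpace 𝕜 Y]

theorem isCompactOperator_of_forall_tail [CompleteSpace Y] (T : C₀(ℕ, 𝕜) →L[𝕜] Y)
    (h : ∀ ε > 0, ∃ n, ∀ x : C₀(ℕ, 𝕜), (∀ i < n, x i = 0) → ‖T x‖ ≤ ε * ‖x‖) :
    IsCompactOperator T := by
  refine isCompactOperator_of_tendsto (l := atTop) (F := fun n => T ∘L truncCLM 𝕜 n) ?_
    (Eventually.of_forall fun n => (isCompactOperator_truncCLM n).clm_comp T)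
  refine Metric.tendsto_atTop.2 fun ε hε => ?_
  obtain ⟨N, hN⟩ := h (ε / 2) (half_pos hε)
  refine ⟨N, fun n hn => lt_of_le_of_lt ?_ (half_lt_self hε)⟩
  rw [dist_eq_norm']
  refine ContinuousLinearMap.opNorm_le_bound _ (half_pos hε).le fun x => ?_
  have htail : ∀ i < N, (x - truncCLM 𝕜 n x) i = 0 := fun i hi => by
    simp [truncCLM_apply, show i < n by omega]
  calc ‖(T - T ∘L truncCLM 𝕜 n) x‖ = ‖T (x - truncCLM 𝕜 n x)‖ := by simp [map_sub]
    _ ≤ ε / 2 * ‖x - truncCLM 𝕜 n x‖ := hN _ htail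
    _ ≤ ε / 2 * ‖x‖ := by gcongr; exact norm_sub_truncCLM_le n x

lemma exists_normalized_block {T : C₀(ℕ, 𝕜) →L[𝕜] Y} {δ : ℝ} {n : ℕ} {x : C₀(ℕ, 𝕜)}
    (hx : ∀ i < n, x i = 0) (hTx : δ * ‖x‖ < ‖T x‖) :
    ∃ m ≥ n, ∃ w : C₀(ℕ, 𝕜), support w ⊆ Set.Ico n m ∧ ‖w‖ = 1 ∧ δ < ‖T w‖ := by
  have hlim := tendsto_truncCLM x
  obtain ⟨m, hnm, hTw⟩ : ∃ m ≥ n, δ * ‖truncCLM 𝕜 m x‖ < ‖T (truncCLM 𝕜 m x)‖ :=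
    ((eventually_ge_atTop n).and ((hlim.norm.const_mul δ).eventually_lt
    ((T.continuous.tendsto x).comp hlim).norm hTx)).exists
  set w := truncCLM 𝕜 m x
  have hw : w ≠ 0 := by rintro h; simp [h] at hTw
  have hw' : 0 < ‖w‖ := norm_pos_iff.2 hw
  refine ⟨m, hnm, (‖w‖⁻¹ : 𝕜) • w, fun j hj => ?_, norm_smul_inv_norm hw, ?_⟩
  · have hj : w j ≠ 0 := fun h => hj (by simp [h])
    by_cases hjm : j < m
    · refine ⟨not_lt.1 fun hjn => hj ?_, hjm⟩
      simp [w, truncCLM_apply, hjm, hx j hjn]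
    · simp [w, truncCLM_apply, hjm] at hj
  · rw [map_smul, norm_smul, norm_inv, RCLike.norm_ofReal, abs_norm, inv_mul_eq_div]
    exact (lt_div_iff₀ hw').2 hTw

theorem exists_disjoint_blocks_of_not_isCompactOperator [CompleteSpace Y]
    {T : C₀(ℕ, 𝕜) →L[𝕜] Y} (hT : ¬IsCompactOperator T) :
    ∃ δ > 0, ∃ u : ℕ → C₀(ℕ, 𝕜), (∀ k, ‖u k‖ = 1) ∧ (∀ k, δ ≤ ‖T (u k)‖) ∧
      Pairwise (Disjoint on fun k => support (u k)) := by
  obtain ⟨δ, hδ, H⟩ : ∃ δ > 0, ∀ n, ∃ x : C₀(ℕ, 𝕜), (∀ i < n, x i = 0) ∧ δ * ‖x‖ < ‖T x‖ := by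
    contrapose! hT
    exact isCompactOperator_of_forall_tail T hT
  choose x hx hTx using H
  choose m hm w hw using fun n => exists_normalized_block (hx n) (hTx n)
  let N : ℕ → ℕ := fun k => Nat.rec 0 (fun _ p => m p) k
  have hN : Monotone N := monotone_nat_of_le_succ fun k => hm (N k)
  refine ⟨δ, hδ, fun k => w (N k), fun k => (hw (N k)).2.1, fun k => (hw (N k)).2.2.le, ?_⟩
  exact hN.pairwise_disjoint_on_Ico_succ.mono fun i j h => h.mono (hw (N i)).1 (hw (N j)).1

lemma apply_eq_zero_of_disjoint {ι : Type*} {v : ι → C₀(ℕ, 𝕜)}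
    (hdisj : Pairwise (Disjoint on fun r => support (v r))) {r r' : ι} (hne : r' ≠ r) {i : ℕ}
    (hri : v r i ≠ 0) : v r' i = 0 :=
  notMem_support.1 fun h => Set.disjoint_left.1 (hdisj hne) h hri

lemma norm_sum_smul_le_of_disjoint {ι : Type*} {v : ι → C₀(ℕ, 𝕜)} (hv : ∀ r, ‖v r‖ ≤ 1)
    (hdisj : Pairwise (Disjoint on fun r => support (v r))) (F : Finset ι) {c : ι → 𝕜} {C : ℝ}
    (hC : 0 ≤ C) (hc : ∀ r ∈ F, ‖c r‖ ≤ C) : ‖∑ r ∈ F, c r • v r‖ ≤ C := by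
  refine norm_le_of_forall_apply_le hC fun i => ?_
  rw [sum_apply]
  by_cases h : ∃ r ∈ F, v r i ≠ 0
  · obtain ⟨r, hr, hri⟩ := h
    rw [Finset.sum_eq_single_of_mem r hr fun r' _ hne => ?_]
    · calc ‖(c r • v r) i‖ = ‖c r‖ * ‖v r i‖ := by simp
        _ ≤ C * 1 := mul_le_mul (hc r hr) ((norm_apply_le _ _).trans (hv r)) (norm_nonneg _) hC
        _ = C := mul_one C
    · simp [apply_eq_zero_of_disjoint hdisj hne hri]
  · push Not at h
    rw [Finset.sum_eq_zero fun r hr => by simp [h r hr]]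
    simpa using hC

lemma sum_norm_apply_le_of_disjoint {ι : Type*} {v : ι → C₀(ℕ, 𝕜)} (hv : ∀ r, ‖v r‖ ≤ 1)
    (hdisj : Pairwise (Disjoint on fun r => support (v r))) (g : C₀(ℕ, 𝕜) →L[𝕜] 𝕜)
    (F : Finset ι) : ∑ r ∈ F, ‖g (v r)‖ ≤ ‖g‖ := by
  -- phases making each `c r * g (v r)` real and nonnegative; `c r = 0` when `g (v r) = 0`
  set c : ι → 𝕜 := fun r => starRingEnd 𝕜 (g (v r)) / ‖g (v r)‖
  have hc : ∀ r, c r * g (v r) = ‖g (v r)‖ := fun r => by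
    rw [div_mul_eq_mul_div, RCLike.conj_mul, sq, mul_self_div_self]
  have hc1 : ∀ r ∈ F, ‖c r‖ ≤ 1 := fun r _ => by
    simpa [c] using div_self_le_one ‖g (v r)‖
  calc ∑ r ∈ F, ‖g (v r)‖ = ‖g (∑ r ∈ F, c r • v r)‖ := by
        simp only [map_sum, map_smul, smul_eq_mul, hc]
        rw [← RCLike.ofReal_sum, RCLike.norm_ofReal,
          abs_of_nonneg (Finset.sum_nonneg fun _ _ => norm_nonneg _)]
    _ ≤ ‖g‖ * ‖∑ r ∈ F, c r • v r‖ := g.le_opNorm _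
    _ ≤ ‖g‖ * 1 := by gcongr; exact norm_sum_smul_le_of_disjoint hv hdisj F zero_le_one hc1
    _ = ‖g‖ := mul_one _

lemma apply_eq_of_hasSum_of_disjoint {ι : Type*} {v : ι → C₀(ℕ, 𝕜)}
    (hdisj : Pairwise (Disjoint on fun r => support (v r))) {a : ι → 𝕜} {z : C₀(ℕ, 𝕜)}
    (hz : HasSum (fun r => a r • v r) z) {r : ι} {i : ℕ} (hri : v r i ≠ 0) :
    z i = a r * v r i := by
  have h := ((evalCLM 𝕜 i).hasSum hz).unique
    (hasSum_single r fun r' hne => by simp [apply_eq_zero_of_disjoint hdisj hne hri])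
  simpa using h

theorem exists_linearIsometry_hasSum_smul {v : ℕ → C₀(ℕ, 𝕜)} (hv : ∀ r, ‖v r‖ = 1)
    (hdisj : Pairwise (Disjoint on fun r => support (v r))) :
    ∃ J : C₀(ℕ, 𝕜) →ₗᵢ[𝕜] C₀(ℕ, 𝕜), ∀ a, HasSum (fun r => a r • v r) (J a) := by
  have hsum : ∀ a : C₀(ℕ, 𝕜), Summable fun r => a r • v r := by
    intro a
    refine summable_iff_vanishing_norm.2 fun ε hε => ?_
    obtain ⟨N, hN⟩ := eventually_atTop.1 ((tendsto_atTop a).norm.eventually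
      (eventually_lt_nhds (by rw [norm_zero]; exact half_pos hε)))
    refine ⟨Finset.range N, fun t ht => (norm_sum_smul_le_of_disjoint (fun r => (hv r).le) hdisj t
      (half_pos hε).le fun r hr => (hN r ?_).le).trans_lt (half_lt_self hε)⟩
    simpa using Finset.disjoint_left.1 ht hr
  have hnorm : ∀ a : C₀(ℕ, 𝕜), ‖∑' r, a r • v r‖ = ‖a‖ := by
    intro a
    refine le_antisymm ?_ (norm_le_of_forall_apply_le (norm_nonneg _) fun r => ?_)
    · exact le_of_tendsto' (hsum a).hasSum.norm fun F => norm_sum_smul_le_of_disjoint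
        (fun r => (hv r).le) hdisj F (norm_nonneg a) fun r _ => norm_apply_le a r
    · obtain ⟨i, hi⟩ := exists_norm_apply_eq_norm (v r)
      have hri : v r i ≠ 0 := by rw [← norm_ne_zero_iff, hi, hv r]; exact one_ne_zero
      calc ‖a r‖ = ‖(∑' r, a r • v r) i‖ := by
            rw [apply_eq_of_hasSum_of_disjoint hdisj (hsum a).hasSum hri, norm_mul, hi, hv r,
              mul_one]
        _ ≤ _ := norm_apply_le _ _
  exact ⟨{ toFun a := ∑' r, a r • v r
           map_add' a b := by
             rw [← (hsum a).tsum_add (hsum b)]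
             exact congrArg tsum (funext fun r => add_smul (a r) (b r) (v r))
           map_smul' c a := by
             simp only [smul_apply, smul_eq_mul, mul_smul, RingHom.id_apply]
             exact (hsum a).tsum_const_smul c
           norm_map' := hnorm }, fun a => (hsum a).hasSum⟩

theorem exists_le_norm_apply_of_hasSum {v : ℕ → C₀(ℕ, 𝕜)} {g : ℕ → C₀(ℕ, 𝕜) →L[𝕜] 𝕜} {δ : ℝ}
    (hdiag : ∀ r, δ ≤ ‖g r (v r)‖)
    (hoff : ∀ r (F : Finset ℕ), r ∉ F → ∑ r' ∈ F, ‖g r (v r')‖ ≤ δ / 2)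
    {a z : C₀(ℕ, 𝕜)} (hz : HasSum (fun r => a r • v r) z) :
    ∃ r, δ / 2 * ‖a‖ ≤ ‖g r z‖ := by
  obtain ⟨r, hr⟩ := exists_norm_apply_eq_norm a
  refine ⟨r, ge_of_tendsto ((g r).hasSum hz).norm ?_⟩
  filter_upwards [eventually_ge_atTop {r}] with F hF
  rw [← Finset.add_sum_erase F _ (Finset.singleton_subset_iff.1 hF)]
  have hfirst : ‖a‖ * δ ≤ ‖g r (a r • v r)‖ := by
    rw [map_smul, norm_smul, hr]; gcongr; exact hdiag r
  have hrest : ‖∑ r' ∈ F.erase r, g r (a r' • v r')‖ ≤ ‖a‖ * (δ / 2) := calc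
    _ ≤ ∑ r' ∈ F.erase r, ‖a r'‖ * ‖g r (v r')‖ := by
        simpa [norm_smul] using norm_sum_le (F.erase r) fun r' => g r (a r' • v r')
    _ ≤ ∑ r' ∈ F.erase r, ‖a‖ * ‖g r (v r')‖ := by gcongr; exact norm_apply_le a _
    _ = ‖a‖ * ∑ r' ∈ F.erase r, ‖g r (v r')‖ := (Finset.mul_sum _ _ _).symm
    _ ≤ ‖a‖ * (δ / 2) := by gcongr; exact hoff r _ (Finset.notMem_erase r F)
  have := norm_le_add_norm_add (g r (a r • v r)) (∑ r' ∈ F.erase r, g r (a r' • v r'))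
  linarith

end Operators

end ZeroAtInftyContinuousMap

open ZeroAtInftyContinuousMap in
/-- Every non-compact bounded operator from `c₀` into a Banach space `Y` is bounded below on
some infinite-dimensional closed subspace of `c₀` isomorphic to `c₀` (equivalently, every
strictly singular operator from `c₀` is compact). -/
theorem noncompact_c0_operator_isomorphism_on_copy {Y : Type*} [NormedAddCommGroup Y]
    [NormedSpace ℂ Y] [CompleteSpace Y] (T : C₀(ℕ, ℂ) →L[ℂ] Y)
    (hT : ¬ IsCompactOperator T) :
    ∃ Z : Submodule ℂ C₀(ℕ, ℂ), IsClosed (Z : Set C₀(ℕ, ℂ)) ∧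
      ¬ FiniteDimensional ℂ Z ∧ Nonempty (Z ≃L[ℂ] C₀(ℕ, ℂ)) ∧
      ∃ c > 0, ∀ z ∈ Z, c * ‖z‖ ≤ ‖T z‖ := by
  obtain ⟨δ, hδ, u, hu, huT, hdisj⟩ := exists_disjoint_blocks_of_not_isCompactOperator hT
  choose f hf hfu using fun k => exists_dual_vector ℂ (T (u k)) (hδ.trans_le (huT k)).ne'
  let g : ℕ → C₀(ℕ, ℂ) →L[ℂ] ℂ := fun k => f k ∘L T
  have hgT : ∀ k z, ‖g k z‖ ≤ ‖T z‖ := fun k z => by simpa [g, hf k] using (f k).le_opNorm (T z)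
  have hgu : ∀ k, δ ≤ ‖g k (u k)‖ := fun k => by simpa [g, hfu k] using huT k
  obtain ⟨s, hs, hoff⟩ := exists_strictMono_sum_offDiag_le (M := fun k j => ‖g k (u j)‖)
    (fun _ _ => norm_nonneg _) (fun k F => (sum_norm_apply_le_of_disjoint (fun j => (hu j).le)
      hdisj (g k) F).trans (ContinuousLinearMap.opNorm_le_bound _ (norm_nonneg T)
        fun z => (hgT k z).trans (T.le_opNorm z))) (half_pos hδ)
  obtain ⟨J, hJ⟩ := exists_linearIsometry_hasSum_smul (fun r => hu (s r))
    (hdisj.comp_of_injective hs.injective)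
  refine ⟨J.range, ?_, fun hfin => ?_, ⟨J.equivRange.symm.toContinuousLinearEquiv⟩,
    δ / 2, half_pos hδ, ?_⟩
  · rw [LinearMap.coe_range]
    exact J.isometry.isClosedEmbedding.isClosed_range
  · have := Module.Finite.equiv J.equivRange.toLinearEquiv.symm
    exact Module.Finite.not_linearIndependent_of_infinite _ (linearIndependent_single_one ℂ)
  · rintro _ ⟨a, rfl⟩
    obtain ⟨r, hr⟩ := exists_le_norm_apply_of_hasSum (fun r => hgu (s r)) hoff (hJ a)
    calc δ / 2 * ‖J a‖ = δ / 2 * ‖a‖ := by rw [J.norm_map]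
      _ ≤ ‖g (s r) (J a)‖ := hr
      _ ≤ ‖T (J a)‖ := hgT _ _
end

section
/- Let X be a Banach space, T ∈ L(X) a commutator, and B ∈ L(X) an element of the intersection of all maximal (closed, proper, two-sided) ideals of L(X). Assume X has property P: an operator is a non-commutator if and only if it equals λI + S with λ ≠ 0 and S in some proper closed ideal. Then T + B is a commutator. -/
variable {X : Type*} [NormedAddCommGroup X] [NormedSpace ℂ X] [CompleteSpace X]

/-- `T` is a commutator of bounded operators. -/
def IsCommutatorOp (T : X →L[ℂ] X) : Prop := ∃ A B : X →L[ℂ] X, T = A * B - B * A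

/-- A maximal ideal of `L(X)`: a proper closed two-sided ideal maximal among such. -/
def IsMaximalOpIdeal (J : TwoSidedIdeal (X →L[ℂ] X)) : Prop :=
  J ≠ ⊤ ∧ IsClosed (J : Set (X →L[ℂ] X)) ∧
    ∀ J' : TwoSidedIdeal (X →L[ℂ] X), J' ≠ ⊤ → IsClosed (J' : Set (X →L[ℂ] X)) →
      J ≤ J' → J' = J

/-- Property P: an operator fails to be a commutator iff it is `λI + S` with `λ ≠ 0` and `S`
in some proper closed two-sided ideal of `L(X)`. -/
def PropertyP (X : Type*) [NormedAddCommGroup X] [NormedSpace ℂ X] [CompleteSpace X] : Prop :=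
  ∀ T : X →L[ℂ] X, ¬ IsCommutatorOp T ↔
    ∃ lam : ℂ, lam ≠ 0 ∧ ∃ J : TwoSidedIdeal (X →L[ℂ] X), J ≠ ⊤ ∧
      IsClosed (J : Set (X →L[ℂ] X)) ∧ T - lam • (1 : X →L[ℂ] X) ∈ J

namespace PropertyP

variable {T : X →L[ℂ] X} {lam : ℂ}

theorem not_isCommutatorOp_of_sub_mem (hP : PropertyP X) {J : TwoSidedIdeal (X →L[ℂ] X)}
    (hJ : J ≠ ⊤) (hJc : IsClosed (J : Set (X →L[ℂ] X))) (hlam : lam ≠ 0)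
    (hT : T - lam • (1 : X →L[ℂ] X) ∈ J) : ¬ IsCommutatorOp T :=
  (hP T).mpr ⟨lam, hlam, J, hJ, hJc, hT⟩

theorem exists_isMaximalOpIdeal_sub_mem (hP : PropertyP X)
    (hmax : ∀ J : TwoSidedIdeal (X →L[ℂ] X), J ≠ ⊤ → IsClosed (J : Set (X →L[ℂ] X)) →
      ∃ M : TwoSidedIdeal (X →L[ℂ] X), IsMaximalOpIdeal M ∧ J ≤ M)
    (hT : ¬ IsCommutatorOp T) :
    ∃ lam : ℂ, lam ≠ 0 ∧ ∃ M : TwoSidedIdeal (X →L[ℂ] X), IsMaximalOpIdeal M ∧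
      T - lam • (1 : X →L[ℂ] X) ∈ M := by
  obtain ⟨lam, hlam, J, hJ, hJc, hTJ⟩ := (hP T).mp hT
  obtain ⟨M, hM, hJM⟩ := hmax J hJ hJc
  exact ⟨lam, hlam, M, hM, hJM hTJ⟩

end PropertyP

/-- If `X` has property P, every proper closed ideal of `L(X)` lies in a maximal one, `T` is a
commutator and `B` lies in every maximal ideal, then `T + B` is a commutator. -/
theorem commutator_add_radical (hP : PropertyP X)
    (hmax : ∀ J : TwoSidedIdeal (X →L[ℂ] X), J ≠ ⊤ → IsClosed (J : Set (X →L[ℂ] X)) →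
      ∃ M : TwoSidedIdeal (X →L[ℂ] X), IsMaximalOpIdeal M ∧ J ≤ M)
    (T B : X →L[ℂ] X) (hT : IsCommutatorOp T)
    (hB : ∀ M : TwoSidedIdeal (X →L[ℂ] X), IsMaximalOpIdeal M → B ∈ M) :
    IsCommutatorOp (T + B) := by
  by_contra hTB
  obtain ⟨lam, hlam, M, hM, hTBM⟩ := hP.exists_isMaximalOpIdeal_sub_mem hmax hTB
  have hTM : T - lam • (1 : X →L[ℂ] X) ∈ M := by
    rwa [add_sub_right_comm, add_mem_cancel_right (hB M hM)] at hTBM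
  exact hP.not_isCommutatorOp_of_sub_mem hM.1 hM.2.1 hlam hTM hT
end

section
/- Let X be a Banach space such that for every T ∈ L(X), the identity I factors through T or through I − T (i.e., T ∉ M_X or I − T ∉ M_X, where M_X = {T : I does not factor through T}). Then M_X is closed under addition, hence is the largest proper two-sided ideal of L(X). -/
/-!
If `1 = v (a + b) u` with `a, b ∈ M_X`, then `v a u` and `1 - v a u = v b u` both lie in `M_X`,
since `M_X` is stable under multiplication on either side; the hypothesis forbids exactly this.
Every proper ideal lies in `M_X`, since an ideal containing some `a` with `v a u = 1` contains `1`.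
-/

/-- `M_X`: the set of operators through which the identity does not factor. -/
def MX (X : Type*) [NormedAddCommGroup X] [NormedSpace ℂ X] : Set (X →L[ℂ] X) :=
  {T : X →L[ℂ] X | ¬ ∃ U V : X →L[ℂ] X, V * T * U = 1}

def nonFactoring (R : Type*) [Monoid R] : Set R :=
  {a | ¬ ∃ u v : R, v * a * u = 1}

lemma MX_eq_nonFactoring (X : Type*) [NormedAddCommGroup X] [NormedSpace ℂ X] :
    MX X = nonFactoring (X →L[ℂ] X) :=
  rfl

namespace nonFactoring

section Monoid

variable {R : Type*} [Monoid R] {a : R}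

lemma one_notMem : (1 : R) ∉ nonFactoring R :=
  fun h ↦ h ⟨1, 1, by simp⟩

lemma mul_mem_left (b : R) (ha : a ∈ nonFactoring R) : b * a ∈ nonFactoring R :=
  fun ⟨u, v, hvu⟩ ↦ ha ⟨u, v * b, by rw [← hvu]; simp only [mul_assoc]⟩

lemma mul_mem_right (b : R) (ha : a ∈ nonFactoring R) : a * b ∈ nonFactoring R :=
  fun ⟨u, v, hvu⟩ ↦ ha ⟨b * u, v, by rw [← hvu]; simp only [mul_assoc]⟩

end Monoid

section Ring

variable {R : Type*} [Ring R]

lemma subset_of_ne_top (J : TwoSidedIdeal R) (hJ : J ≠ ⊤) : (J : Set R) ⊆ nonFactoring R := by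
  rintro a haJ ⟨u, v, hvu⟩
  exact hJ <| J.eq_top <| hvu ▸ J.mul_mem_right _ _ (J.mul_mem_left _ _ haJ)

lemma zero_mem [Nontrivial R] : (0 : R) ∈ nonFactoring R :=
  fun ⟨u, v, hvu⟩ ↦ by simp at hvu

lemma neg_mem {a : R} (ha : a ∈ nonFactoring R) : -a ∈ nonFactoring R := by
  simpa using mul_mem_left (-1) ha

lemma add_mem (h : ∀ c : R, c ∉ nonFactoring R ∨ 1 - c ∉ nonFactoring R) {a b : R}
    (ha : a ∈ nonFactoring R) (hb : b ∈ nonFactoring R) : a + b ∈ nonFactoring R := by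
  rintro ⟨u, v, hvu⟩
  have hva : v * a * u ∈ nonFactoring R := mul_mem_right u (mul_mem_left v ha)
  have hvb : v * b * u ∈ nonFactoring R := mul_mem_right u (mul_mem_left v hb)
  have hsplit : 1 - v * a * u = v * b * u := by rw [← hvu]; noncomm_ring
  rcases h (v * a * u) with hc | hc
  · exact hc hva
  · exact hc (hsplit ▸ hvb)

def twoSidedIdeal [Nontrivial R] (h : ∀ c : R, c ∉ nonFactoring R ∨ 1 - c ∉ nonFactoring R) :
    TwoSidedIdeal R :=
  .mk' (nonFactoring R) zero_mem (add_mem h) neg_mem (mul_mem_left _) (mul_mem_right _)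

lemma coe_twoSidedIdeal [Nontrivial R]
    (h : ∀ c : R, c ∉ nonFactoring R ∨ 1 - c ∉ nonFactoring R) :
    (twoSidedIdeal h : Set R) = nonFactoring R :=
  TwoSidedIdeal.coe_mk' ..

lemma twoSidedIdeal_ne_top [Nontrivial R]
    (h : ∀ c : R, c ∉ nonFactoring R ∨ 1 - c ∉ nonFactoring R) : twoSidedIdeal h ≠ ⊤ := by
  intro htop
  have h1 : (1 : R) ∈ (twoSidedIdeal h : Set R) := by simp [htop]
  exact one_notMem (coe_twoSidedIdeal h ▸ h1)

end Ring

end nonFactoring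

theorem MX_largest_ideal_general (X : Type*) [NormedAddCommGroup X] [NormedSpace ℂ X]
    [Nontrivial X]
    (h : ∀ T : X →L[ℂ] X, T ∉ MX X ∨ (1 - T) ∉ MX X) :
    (∀ S T : X →L[ℂ] X, S ∈ MX X → T ∈ MX X → S + T ∈ MX X) ∧
    ∃ J : TwoSidedIdeal (X →L[ℂ] X), (J : Set (X →L[ℂ] X)) = MX X ∧ J ≠ ⊤ ∧
      ∀ J' : TwoSidedIdeal (X →L[ℂ] X), J' ≠ ⊤ → (J' : Set (X →L[ℂ] X)) ⊆ MX X := by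
  rw [MX_eq_nonFactoring] at h ⊢
  exact ⟨fun _ _ ↦ nonFactoring.add_mem h, nonFactoring.twoSidedIdeal h,
    nonFactoring.coe_twoSidedIdeal h, nonFactoring.twoSidedIdeal_ne_top h,
    nonFactoring.subset_of_ne_top⟩

/-- If for every `T ∈ L(X)` either `T ∉ M_X` or `I − T ∉ M_X`, then `M_X` is closed under
addition and is the largest proper two-sided ideal of `L(X)`. -/
theorem MX_largest_ideal (X : Type*) [NormedAddCommGroup X] [NormedSpace ℂ X]
    [CompleteSpace X] [Nontrivial X]
    (h : ∀ T : X →L[ℂ] X, T ∉ MX X ∨ (1 - T) ∉ MX X) :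
    (∀ S T : X →L[ℂ] X, S ∈ MX X → T ∈ MX X → S + T ∈ MX X) ∧
    ∃ J : TwoSidedIdeal (X →L[ℂ] X), (J : Set (X →L[ℂ] X)) = MX X ∧ J ≠ ⊤ ∧
      ∀ J' : TwoSidedIdeal (X →L[ℂ] X), J' ≠ ⊤ → (J' : Set (X →L[ℂ] X)) ⊆ MX X :=
  MX_largest_ideal_general X h
end
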